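/- Let q be a prime power, let m, s ≥ 1 and t ≥ 0 be integers, and let U ⊆ {1,...,s}. For every integer n ≥ 1 one has n·C(R_t⟨U⟩) ≤ C(R_t⟨U⟩^n) ≤ n·(s − min{2t, |U|}); in particular C(R_t⟨U⟩) ≤ C0(R_t⟨U⟩) ≤ s − min{2t, |U|}. Moreover, if q ≥ m ≥ s, then all of these inequalities are equalities. -/

import Mathlib

open Set

/-- A code `C` is good for the channel `Ω` if it is nonempty and the fan-out sets of
distinct codewords are disjoint. -/
def IsGoodCode {X Y : Type*} (Ω : X → Set Y) (C : Finset X) : Prop :=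
  C.Nonempty ∧ ∀ x ∈ C, ∀ x' ∈ C, x ≠ x' → Ω x ∩ Ω x' = ∅

/-- The largest cardinality of a good code for `Ω`. -/
noncomputable def maxGoodCode {X Y : Type*} [Fintype X] (Ω : X → Set Y) : ℕ :=
  sSup {n : ℕ | ∃ C : Finset X, IsGoodCode Ω C ∧ C.card = n}

/-- The one-shot capacity of a channel (base-2 logarithm). -/
noncomputable def oneShotCap {X Y : Type*} [Fintype X] (Ω : X → Set Y) : ℝ :=
  Real.logb 2 (maxGoodCode Ω)

/-- The product of two channels. -/
def chProd {X1 Y1 X2 Y2 : Type*} (Ω1 : X1 → Set Y1) (Ω2 : X2 → Set Y2) :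
    X1 × X2 → Set (Y1 × Y2) :=
  fun p => Ω1 p.1 ×ˢ Ω2 p.2

/-- The `n`-th power of a channel. -/
def chPow {X Y : Type*} (Ω : X → Set Y) (n : ℕ) :
    (Fin n → X) → Set (Fin n → Y) :=
  fun x => Set.univ.pi fun k => Ω (x k)

/-- The zero-error capacity of a channel: `sup { C(Ω^n)/n : n ≥ 1 }` (base 2). -/
noncomputable def zeroErrorCap {X Y : Type*} [Fintype X] (Ω : X → Set Y) : ℝ :=
  sSup {r : ℝ | ∃ n : ℕ, 1 ≤ n ∧ r = oneShotCap (chPow Ω n) / n}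

/-- Concatenation of channels: `(Ω1 ▸ Ω2)(x) = ⋃_{y ∈ Ω1(x)} Ω2(y)`. -/
def chConcat {X Y Z : Type*} (Ω1 : X → Set Y) (Ω2 : Y → Set Z) : X → Set Z :=
  fun x => ⋃ y ∈ Ω1 x, Ω2 y

/-- Union of a family of channels with the same alphabets. -/
def chUnion {I X Y : Type*} (Ω : I → X → Set Y) : X → Set Y :=
  fun x => ⋃ i, Ω i x

/-- Channels are isomorphic if there is a bijection of input alphabets preserving the
adjacency function (i.e. preserving nonemptiness of pairwise intersections of fan-out sets). -/
def ChIso {X1 Y1 X2 Y2 : Type*} (Ω1 : X1 → Set Y1) (Ω2 : X2 → Set Y2) : Prop :=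
  ∃ f : X1 ≃ X2, ∀ x x' : X1,
    ((Ω1 x ∩ Ω1 x').Nonempty ↔ (Ω2 (f x) ∩ Ω2 (f x')).Nonempty)

/-- One-shot capacity expressed as a logarithm in base `q`. -/
noncomputable def capBase {X Y : Type*} [Fintype X] (q : ℕ) (Ω : X → Set Y) : ℝ :=
  Real.logb q (maxGoodCode Ω)

/-- Zero-error capacity expressed as a logarithm in base `q`. -/
noncomputable def zeroCapBase {X Y : Type*} [Fintype X] (q : ℕ) (Ω : X → Set Y) : ℝ :=
  sSup {r : ℝ | ∃ n : ℕ, 1 ≤ n ∧ r = capBase q (chPow Ω n) / n}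

/-- The product of a finite family of channels. -/
def chPi {n : ℕ} {X Y : Fin n → Type*} (Ω : ∀ k, X k → Set (Y k)) :
    (∀ k, X k) → Set (∀ k, Y k) :=
  fun x => Set.univ.pi fun k => Ω k (x k)

/-- The `m`-fold concatenation `Ψ 0 ▸ Ψ 1 ▸ ⋯ ▸ Ψ (m-1)` of a chain of channels. -/
def chChain {Z : ℕ → Type*} (Ψ : ∀ i, Z i → Set (Z (i + 1))) : ∀ m, Z 0 → Set (Z m)
  | 0 => fun x => {x}
  | m + 1 => chConcat (chChain Ψ m) (Ψ m)

/-- Concatenation of a list of channels on a fixed alphabet. -/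
def chainList {W : Type*} : List (W → Set W) → (W → Set W)
  | [] => fun x => {x}
  | Ω :: rest => chConcat Ω (chainList rest)

/-- The rank-metric matrix channel `R_t⟨U⟩ : F^{m×s} ⇝ F^{m×s}`. -/
def Rch (F : Type*) [Field F] [DecidableEq F] (m s t : ℕ) (U : Finset (Fin s)) :
    Matrix (Fin m) (Fin s) F → Set (Matrix (Fin m) (Fin s) F) :=
  fun M => {N | (N - M).rank ≤ t ∧ ∀ i, i ∉ U → ∀ j, N j i = M j i}

set_option linter.unusedSectionVars false
section AuxLemmas
section General
variable {X Y : Type*} [Fintype X]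

lemma goodCode_singleton (Ω : X → Set Y) (x : X) : IsGoodCode Ω {x} := by
  refine ⟨Finset.singleton_nonempty x, ?_⟩
  intro a ha b hb hab
  simp only [Finset.mem_singleton] at ha hb
  exact absurd (ha.trans hb.symm) hab

lemma goodSet_bddAbove (Ω : X → Set Y) :
    BddAbove {n : ℕ | ∃ C : Finset X, IsGoodCode Ω C ∧ C.card = n} :=
  ⟨Fintype.card X, by rintro n ⟨C, _, rfl⟩; exact C.card_le_univ⟩

lemma le_maxGoodCode {Ω : X → Set Y} {C : Finset X} (h : IsGoodCode Ω C) :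
    C.card ≤ maxGoodCode Ω :=
  le_csSup (goodSet_bddAbove Ω) ⟨C, h, rfl⟩

lemma maxGoodCode_le [Nonempty X] {Ω : X → Set Y} {N : ℕ}
    (h : ∀ C : Finset X, IsGoodCode Ω C → C.card ≤ N) : maxGoodCode Ω ≤ N := by
  have h1 : (1 : ℕ) ∈ {n : ℕ | ∃ C : Finset X, IsGoodCode Ω C ∧ C.card = n} :=
    ⟨{Classical.arbitrary X}, goodCode_singleton Ω _, Finset.card_singleton _⟩
  refine csSup_le ⟨1, h1⟩ ?_
  rintro n ⟨C, hC, rfl⟩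
  exact h C hC

lemma exists_maxGoodCode [Nonempty X] (Ω : X → Set Y) :
    ∃ C : Finset X, IsGoodCode Ω C ∧ C.card = maxGoodCode Ω := by
  have h1 : (1 : ℕ) ∈ {n : ℕ | ∃ C : Finset X, IsGoodCode Ω C ∧ C.card = n} :=
    ⟨{Classical.arbitrary X}, goodCode_singleton Ω _, Finset.card_singleton _⟩
  exact Nat.sSup_mem ⟨1, h1⟩ (goodSet_bddAbove Ω)

lemma one_le_maxGoodCode [Nonempty X] (Ω : X → Set Y) : 1 ≤ maxGoodCode Ω := by
  have := le_maxGoodCode (goodCode_singleton Ω (Classical.arbitrary X))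
  simpa using this

lemma isGoodCode_pow {Ω : X → Set Y} {C : Finset X} (h : IsGoodCode Ω C) (n : ℕ) :
    IsGoodCode (chPow Ω n) (Fintype.piFinset fun _ : Fin n => C) := by
  classical
  obtain ⟨x0, hx0⟩ := h.1
  refine ⟨⟨fun _ => x0, Fintype.mem_piFinset.2 fun _ => hx0⟩, ?_⟩
  intro x hx x' hx' hne
  obtain ⟨k, hk⟩ := Function.ne_iff.1 hne
  have hdisj : Ω (x k) ∩ Ω (x' k) = ∅ :=
    h.2 _ (Fintype.mem_piFinset.1 hx k) _ (Fintype.mem_piFinset.1 hx' k) hk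
  rw [Set.eq_empty_iff_forall_notMem]
  rintro N ⟨h1, h2⟩
  have : N k ∈ Ω (x k) ∩ Ω (x' k) := ⟨h1 k trivial, h2 k trivial⟩
  rw [hdisj] at this
  exact this

end General

section MatrixAux

variable {F : Type*} [Field F] [DecidableEq F] {m s : ℕ}

lemma rank_le_card_support (A : Matrix (Fin m) (Fin s) F) (E : Finset (Fin s))
    (h : ∀ j i, i ∉ E → A j i = 0) : A.rank ≤ E.card := by
  classical
  set B : Matrix (Fin m) ↥E F := A.submatrix id (Subtype.val) with hB
  set C : Matrix ↥E (Fin s) F := Matrix.of fun (e : ↥E) i => if (e : Fin s) = i then (1 : F) else 0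
    with hC
  have hA : A = B * C := by
    ext j i
    rw [Matrix.mul_apply]
    by_cases hi : i ∈ E
    · rw [Finset.sum_eq_single (⟨i, hi⟩ : ↥E)]
      · simp [hB, hC]
      · intro e _ he
        have : ¬((e : Fin s) = i) := fun hh => he (Subtype.ext hh)
        simp [hB, hC, this]
      · intro habs; exact absurd (Finset.mem_univ _) habs
    · rw [h j i hi]
      symm
      apply Finset.sum_eq_zero
      intro e _
      have : ¬((e : Fin s) = i) := fun hh => hi (hh ▸ e.2)
      simp [hB, hC, this]
  calc A.rank = (B * C).rank := by rw [← hA]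
    _ ≤ B.rank := Matrix.rank_mul_le_left B C
    _ ≤ Fintype.card ↥E := B.rank_le_card_width
    _ = E.card := Fintype.card_coe E

lemma matrix_rank_add_le (A B : Matrix (Fin m) (Fin s) F) :
    (A + B).rank ≤ A.rank + B.rank := by
  have h1 : LinearMap.range (A + B).mulVecLin ≤
      LinearMap.range A.mulVecLin ⊔ LinearMap.range B.mulVecLin := by
    rintro x ⟨v, rfl⟩
    rw [Matrix.mulVecLin_add]
    exact Submodule.mem_sup.2 ⟨A.mulVecLin v, ⟨v, rfl⟩, B.mulVecLin v, ⟨v, rfl⟩, rfl⟩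
  calc (A + B).rank = Module.finrank F (LinearMap.range (A + B).mulVecLin) := rfl
    _ ≤ Module.finrank F ↥(LinearMap.range A.mulVecLin ⊔ LinearMap.range B.mulVecLin) :=
        Submodule.finrank_mono h1
    _ ≤ _ := Submodule.finrank_add_le_finrank_add_finrank _ _

lemma matrix_rank_sub_le (A B : Matrix (Fin m) (Fin s) F) :
    (A - B).rank ≤ A.rank + B.rank := by
  have hneg : (-B).rank ≤ B.rank := by
    have : -B = B * (-1 : Matrix (Fin s) (Fin s) F) := by
      rw [Matrix.mul_neg, Matrix.mul_one]
    rw [this]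
    exact Matrix.rank_mul_le_left _ _
  calc (A - B).rank = (A + (-B)).rank := by rw [sub_eq_add_neg]
    _ ≤ A.rank + (-B).rank := matrix_rank_add_le _ _
    _ ≤ A.rank + B.rank := Nat.add_le_add_left hneg _

end MatrixAux

section RchAux

variable {F : Type*} [Field F] [Fintype F] [DecidableEq F] {m s : ℕ} {t : ℕ} {U : Finset (Fin s)}

lemma rank_sub_le_of_confusable {M M' : Matrix (Fin m) (Fin s) F}
    (h : (Rch F m s t U M ∩ Rch F m s t U M').Nonempty) : (M - M').rank ≤ 2 * t := by
  obtain ⟨N, hN1, hN2⟩ := h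
  have : M - M' = (N - M') - (N - M) := by abel
  rw [this]
  calc ((N - M') - (N - M)).rank ≤ (N - M').rank + (N - M).rank := matrix_rank_sub_le _ _
    _ ≤ t + t := Nat.add_le_add hN2.1 hN1.1
    _ = 2 * t := by ring

lemma agree_of_confusable {M M' : Matrix (Fin m) (Fin s) F}
    (h : (Rch F m s t U M ∩ Rch F m s t U M').Nonempty) :
    ∀ i, i ∉ U → ∀ j, M j i = M' j i := by
  obtain ⟨N, hN1, hN2⟩ := h
  intro i hi j
  rw [← hN1.2 i hi j, hN2.2 i hi j]

lemma confusable_of_agree {M M' : Matrix (Fin m) (Fin s) F} {E : Finset (Fin s)}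
    (hEU : E ⊆ U) (hE : E.card ≤ 2 * t)
    (hagree : ∀ i, i ∉ E → ∀ j, M j i = M' j i) :
    (Rch F m s t U M ∩ Rch F m s t U M').Nonempty := by
  classical
  obtain ⟨E₁, hE₁sub, hE₁card⟩ := Finset.exists_subset_card_eq (s := E) (n := min t E.card) (min_le_right _ _)
  set N : Matrix (Fin m) (Fin s) F := Matrix.of fun j i => if i ∈ E₁ then M' j i else M j i
    with hNdef
  refine ⟨N, ⟨?_, ?_⟩, ?_, ?_⟩
  · -- (N - M).rank ≤ t
    have hsupp : ∀ j i, i ∉ E₁ → (N - M) j i = 0 := by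
      intro j i hi
      simp [hNdef, Matrix.sub_apply, hi]
    calc (N - M).rank ≤ E₁.card := rank_le_card_support _ _ hsupp
      _ ≤ t := hE₁card ▸ min_le_left _ _
  · intro i hi j
    have : i ∉ E₁ := fun hh => hi (hEU (hE₁sub hh))
    simp [hNdef, this]
  · -- (N - M').rank ≤ t
    have hsupp : ∀ j i, i ∉ E \ E₁ → (N - M') j i = 0 := by
      intro j i hi
      rw [Finset.mem_sdiff, not_and_or, not_not] at hi
      rcases hi with hi | hi
      · have hi1 : i ∉ E₁ := fun hh => hi (hE₁sub hh)
        simp [hNdef, Matrix.sub_apply, hi1, hagree i hi j]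
      · simp [hNdef, Matrix.sub_apply, hi]
    calc (N - M').rank ≤ (E \ E₁).card := rank_le_card_support _ _ hsupp
      _ ≤ t := by
          rw [Finset.card_sdiff_of_subset hE₁sub, hE₁card]
          omega
  · intro i hi j
    have : i ∉ E₁ := fun hh => hi (hEU (hE₁sub hh))
    have hiE : i ∉ E := fun hh => hi (hEU hh)
    simp [hNdef, this, hagree i hiE j]

lemma good_pow_card_le {n : ℕ} {C : Finset (Fin n → Matrix (Fin m) (Fin s) F)}
    (h : IsGoodCode (chPow (Rch F m s t U) n) C) :
    C.card ≤ ((Fintype.card F ^ m) ^ (s - min (2 * t) U.card)) ^ n := by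
  classical
  obtain ⟨E, hEU, hEcard⟩ := Finset.exists_subset_card_eq (s := U) (n := min (2 * t) U.card) (min_le_right _ _)
  set T := Fin n → Fin m → {i : Fin s // i ∉ E} → F with hT
  have key : C.card ≤ Fintype.card T := by
    set Φ : (Fin n → Matrix (Fin m) (Fin s) F) → T := fun x k j i => x k j i.1 with hΦ
    have hinj : Set.InjOn Φ ↑C := by
      intro x hx x' hx' heq
      by_contra hne
      have hagree : ∀ k : Fin n, ∀ i, i ∉ E → ∀ j, x k j i = x' k j i := by
        intro k i hi j
        have := congrFun (congrFun (congrFun heq k) j) ⟨i, hi⟩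
        exact this
      have hconf : ∀ k : Fin n,
          ((Rch F m s t U) (x k) ∩ (Rch F m s t U) (x' k)).Nonempty := fun k =>
        confusable_of_agree hEU (hEcard ▸ min_le_left _ _) (hagree k)
      choose N hN using hconf
      have hmem : N ∈ chPow (Rch F m s t U) n x ∩ chPow (Rch F m s t U) n x' :=
        ⟨fun k _ => (hN k).1, fun k _ => (hN k).2⟩
      rw [h.2 x hx x' hx' hne] at hmem
      exact hmem
    calc C.card ≤ (Finset.univ : Finset T).card :=
          Finset.card_le_card_of_injOn Φ (fun x _ => Finset.mem_univ _) hinj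
      _ = Fintype.card T := Finset.card_univ
  have hcardsub : Fintype.card {i : Fin s // i ∉ E} = s - min (2 * t) U.card := by
    rw [← hEcard]
    have := Fintype.card_subtype_compl (fun i : Fin s => i ∈ E)
    simpa [Fintype.card_coe] using this
  have hcardT : Fintype.card T = ((Fintype.card F ^ m) ^ (s - min (2 * t) U.card)) ^ n := by
    show Fintype.card (Fin n → Fin m → {i : Fin s // i ∉ E} → F) = _
    rw [Fintype.card_fun, Fintype.card_fun, Fintype.card_fun, hcardsub]
    simp only [Fintype.card_fin]
    rw [← pow_mul, ← pow_mul, ← pow_mul, ← pow_mul]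
    ring_nf
  rw [hcardT] at key
  exact key

end RchAux

section EasyCode

variable {F : Type*} [Field F] [Fintype F] [DecidableEq F] {m s : ℕ} {t : ℕ} {U : Finset (Fin s)}

lemma exists_good_easy (t : ℕ) (U : Finset (Fin s)) :
    ∃ C : Finset (Matrix (Fin m) (Fin s) F),
      IsGoodCode (Rch F m s t U) C ∧ C.card = (Fintype.card F ^ m) ^ (s - U.card) := by
  classical
  set ext : (Fin m → {i : Fin s // i ∉ U} → F) → Matrix (Fin m) (Fin s) F :=
    fun A => Matrix.of fun j i => if h : i ∈ U then 0 else A j ⟨i, h⟩ with hext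
  have hinj : Function.Injective ext := by
    intro A A' hAA
    funext j i
    have := congrFun (congrFun hAA j) i.1
    simpa [hext, i.2] using this
  refine ⟨Finset.image ext Finset.univ, ⟨?_, ?_⟩, ?_⟩
  · exact ⟨ext 0, Finset.mem_image_of_mem _ (Finset.mem_univ _)⟩
  · intro M hM M' hM' hne
    rw [← Set.not_nonempty_iff_eq_empty]
    intro hconf
    obtain ⟨A, _, rfl⟩ := Finset.mem_image.1 hM
    obtain ⟨A', _, rfl⟩ := Finset.mem_image.1 hM'
    apply hne
    apply congrArg ext
    funext j i
    have := agree_of_confusable hconf i.1 i.2 j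
    simpa [hext, i.2] using this
  · rw [Finset.card_image_of_injective _ hinj, Finset.card_univ, Fintype.card_fun,
      Fintype.card_fun]
    have hcardsub : Fintype.card {i : Fin s // i ∉ U} = s - U.card := by
      have := Fintype.card_subtype_compl (fun i : Fin s => i ∈ U)
      simpa [Fintype.card_coe] using this
    rw [hcardsub, Fintype.card_fin, ← pow_mul, ← pow_mul]
    ring_nf

end EasyCode

section BigFieldSec

open Polynomial

variable (F : Type*) [Field F] [Fintype F]

/-- A field extension of `F` of degree `m`: the splitting field of `X^(q^m) - X`. -/
noncomputable def BigField (m : ℕ) : Type _ :=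
  SplittingField (X ^ (Fintype.card F ^ m) - X : F[X])

noncomputable instance : Field (BigField F m) :=
  inferInstanceAs (Field (SplittingField _))

noncomputable instance : Algebra F (BigField F m) :=
  inferInstanceAs (Algebra F (SplittingField _))

instance : IsSplittingField F (BigField F m) (X ^ (Fintype.card F ^ m) - X) :=
  inferInstanceAs (IsSplittingField F (SplittingField _) _)

instance : FiniteDimensional F (BigField F m) :=
  inferInstanceAs (FiniteDimensional F (SplittingField _))

instance : Finite (BigField F m) := Module.finite_of_finite F

theorem BigField.finrank_eq {m : ℕ} (hm : m ≠ 0) :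
    Module.finrank F (BigField F m) = m := by
  classical
  haveI : Fintype (BigField F m) := Fintype.ofFinite _
  have hq : 1 < Fintype.card F := Fintype.one_lt_card
  set q := Fintype.card F with hqdef
  set L := BigField F m with hLdef
  set g_poly : F[X] := X ^ q ^ m - X with hg
  have aux : g_poly ≠ 0 := FiniteField.X_pow_card_pow_sub_X_ne_zero _ hm hq
  set p := ringChar F with hpdef
  haveI hp : Fact p.Prime := ⟨CharP.char_is_prime F p⟩
  obtain ⟨nn, hpp, hcard⟩ := FiniteField.card F p
  haveI : CharP L p := charP_of_injective_algebraMap (algebraMap F L).injective p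
  have hqp : q = p ^ (nn : ℕ) := hcard
  have hpq : p ∣ q ^ m := dvd_pow (hqp ▸ dvd_pow_self p nn.pos.ne') hm
  have key : Fintype.card (g_poly.rootSet L) = g_poly.natDegree :=
    card_rootSet_eq_natDegree (galois_poly_separable p _ hpq)
      (SplittingField.splits (X ^ q ^ m - X : F[X]))
  have nat_degree_eq : g_poly.natDegree = q ^ m :=
    FiniteField.X_pow_card_pow_sub_X_natDegree_eq _ hm hq
  rw [nat_degree_eq] at key
  have hpow : ∀ x y : L, (x + y) ^ q ^ m = x ^ q ^ m + y ^ q ^ m := by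
    intro x y
    rw [hqp, ← pow_mul]
    exact add_pow_char_pow x y p ((nn : ℕ) * m)
  have hneg1 : ((-1 : L)) ^ q ^ m = -1 := by
    rw [hqp, ← pow_mul]
    exact neg_one_pow_char_pow L p ((nn : ℕ) * m)
  suffices hroots : g_poly.rootSet L = Set.univ by
    simp_rw [hroots, ← Fintype.ofEquiv_card (Equiv.Set.univ _)] at key
    rw [@Module.card_eq_pow_finrank F L _ _ _ _ (_)] at key
    exact Nat.pow_right_injective hq key
  rw [Set.eq_univ_iff_forall]
  suffices ∀ x, x ∈ (⊤ : Subalgebra F L) → x ∈ g_poly.rootSet L by simpa using this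
  have hadj : Algebra.adjoin F (g_poly.rootSet L) = ⊤ :=
    SplittingField.adjoin_rootSet _
  rw [← hadj]
  simp_rw [Algebra.mem_adjoin_iff]
  intro x hx
  refine Subring.closure_induction ?_ ?_ ?_ ?_ ?_ ?_ hx <;> simp_rw [mem_rootSet_of_ne aux]
  · rintro x (⟨r, rfl⟩ | hx)
    · simp only [hg, map_sub, map_pow, aeval_X]
      rw [← map_pow, FiniteField.pow_card_pow, sub_self]
    · rwa [mem_rootSet_of_ne aux] at hx
  · simp only [hg, map_sub, aeval_X_pow, aeval_X]
    rw [zero_pow (pow_ne_zero m (by omega : q ≠ 0)), sub_zero]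
  · simp [hg]
  · intro x y _ _ hx hy
    simp only [hg, aeval_X_pow, aeval_X, map_sub, sub_eq_zero] at *
    rw [hpow, hx, hy]
  · intro x _ hx
    simp only [hg, sub_eq_zero, aeval_X_pow, aeval_X, map_sub] at *
    rw [neg_pow, hneg1, hx]
    ring
  · intro x y _ _ hx hy
    simp only [hg, aeval_X_pow, aeval_X, map_sub, mul_pow, sub_eq_zero] at *
    rw [hx, hy]

end BigFieldSec

section Gabidulin

open Polynomial Matrix

variable {F : Type*} [Field F] [Fintype F] [DecidableEq F]

lemma exists_good_rank_code {m s : ℕ} (hsm : s ≤ m) (hm : 1 ≤ m) (k : ℕ)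
    (hk1 : 1 ≤ k) (hks : k ≤ s) :
    ∃ C : Finset (Matrix (Fin m) (Fin s) F),
      C.card = (Fintype.card F ^ m) ^ k ∧
      ∀ M ∈ C, ∀ M' ∈ C, M ≠ M' → s - k < (M - M').rank := by
  classical
  set q := Fintype.card F with hqdef
  have hq : 1 < q := Fintype.one_lt_card
  set L := BigField F m with hLdef
  haveI : Fintype L := Fintype.ofFinite _
  have hfr : Module.finrank F L = m := BigField.finrank_eq F (by omega)
  have hcardL : Fintype.card L = q ^ m := by
    rw [Module.card_eq_pow_finrank (K := F) (V := L), hfr]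
  set p := ringChar F with hpdef
  haveI hp : Fact p.Prime := ⟨CharP.char_is_prime F p⟩
  obtain ⟨nn, hpp, hcard⟩ := FiniteField.card F p
  have hqp : q = p ^ (nn : ℕ) := hcard
  haveI : CharP L p := charP_of_injective_algebraMap (algebraMap F L).injective p
  have hfrob_add : ∀ (e : ℕ) (x y : L), (x + y) ^ q ^ e = x ^ q ^ e + y ^ q ^ e := by
    intro e x y
    rw [hqp, ← pow_mul]
    exact add_pow_char_pow x y p ((nn : ℕ) * e)
  have hfrob_smul : ∀ (e : ℕ) (a : F) (x : L), (a • x) ^ q ^ e = a • x ^ q ^ e := by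
    intro e a x
    rw [Algebra.smul_def, Algebra.smul_def, mul_pow, ← map_pow, FiniteField.pow_card_pow]
  -- basis and evaluation points
  let b : Module.Basis (Fin m) F L := Module.finBasisOfFinrankEq F L hfr
  let g : Fin s → L := fun i => b (Fin.castLE hsm i)
  have hgli : LinearIndependent F g :=
    b.linearIndependent.comp _ (Fin.castLE_injective hsm)
  set W : Submodule F L := Submodule.span F (Set.range g) with hWdef
  have hWfr : Module.finrank F ↥W = s := by
    rw [hWdef, finrank_span_eq_card hgli, Fintype.card_fin]
  -- the code matrices
  let Mat : (Fin k → L) → Matrix (Fin m) (Fin s) F := fun c =>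
    Matrix.of fun a i => b.equivFun (∑ j : Fin k, c j * g i ^ q ^ (j : ℕ)) a
  -- key rank bound
  have main : ∀ c : Fin k → L, c ≠ 0 → s - k < (Mat c).rank := by
    intro c hc
    -- the linearized q-polynomial as a linear map
    let φ : L →ₗ[F] L :=
      { toFun := fun x => ∑ j : Fin k, c j * x ^ q ^ (j : ℕ)
        map_add' := by
          intro x y
          rw [← Finset.sum_add_distrib]
          exact Finset.sum_congr rfl fun j _ => by rw [hfrob_add, mul_add]
        map_smul' := by
          intro a x
          simp only [RingHom.id_apply]
          rw [Finset.smul_sum]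
          exact Finset.sum_congr rfl fun j _ => by
            rw [hfrob_smul, mul_smul_comm] }
    have hφ : ∀ z : L, φ z = ∑ j : Fin k, c j * z ^ q ^ (j : ℕ) := fun z => rfl
    -- kernel bound via the polynomial
    have hker : Module.finrank F ↥(LinearMap.ker (φ.domRestrict W)) ≤ k - 1 := by
      obtain ⟨j0, hj0⟩ := Function.ne_iff.1 hc
      set P : L[X] := ∑ j : Fin k, Polynomial.C (c j) * X ^ q ^ (j : ℕ) with hPdef
      have hPne : P ≠ 0 := by
        intro hP0
        have hcoeff : P.coeff (q ^ (j0 : ℕ)) = c j0 := by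
          rw [hPdef, finset_sum_coeff]
          rw [Finset.sum_eq_single j0]
          · simp [coeff_C_mul, coeff_X_pow]
          · intro j _ hj
            have hne : q ^ (j0 : ℕ) ≠ q ^ (j : ℕ) := by
              intro hh
              exact hj (Fin.ext (Nat.pow_right_injective hq hh.symm))
            simp [coeff_C_mul, coeff_X_pow, hne]
          · intro habs
            exact absurd (Finset.mem_univ _) habs
        rw [hP0, coeff_zero] at hcoeff
        exact hj0 hcoeff.symm
      have hdeg : P.natDegree ≤ q ^ (k - 1) := by
        rw [hPdef]
        refine natDegree_sum_le_of_forall_le _ _ ?_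
        intro j _
        refine (natDegree_C_mul_X_pow_le _ _).trans ?_
        refine Nat.pow_le_pow_right (by omega) ?_
        have := j.isLt
        omega
      haveI : Fintype ↥(LinearMap.ker (φ.domRestrict W)) := Fintype.ofFinite _
      have hmaps : ∀ x : ↥(LinearMap.ker (φ.domRestrict W)),
          ((x : ↥W) : L) ∈ P.roots.toFinset := by
        intro x
        rw [Multiset.mem_toFinset, mem_roots hPne]
        have hx : φ ((x : ↥W) : L) = 0 := by
          have := x.2
          rw [LinearMap.mem_ker, LinearMap.domRestrict_apply] at this
          exact this
        show P.IsRoot _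
        rw [IsRoot.def, hPdef]
        simp only [eval_finset_sum, eval_mul, eval_C, eval_pow, eval_X]
        rw [← hφ]
        exact hx
      have h1 : Fintype.card ↥(LinearMap.ker (φ.domRestrict W)) ≤ P.roots.toFinset.card := by
        rw [← Fintype.card_coe (P.roots.toFinset)]
        exact Fintype.card_le_of_injective (fun x => ⟨((x : ↥W) : L), hmaps x⟩)
          (fun x y hxy => by
            apply Subtype.ext
            apply Subtype.ext
            exact Subtype.mk_eq_mk.1 hxy)
      have h2 : Fintype.card ↥(LinearMap.ker (φ.domRestrict W)) ≤ q ^ (k - 1) :=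
        h1.trans ((Multiset.toFinset_card_le _).trans (P.card_roots'.trans hdeg))
      rw [Module.card_eq_pow_finrank (K := F) (V := ↥(LinearMap.ker (φ.domRestrict W)))] at h2
      exact (Nat.pow_le_pow_iff_right hq).1 h2
    -- rank-nullity
    have hrn : Module.finrank F ↥(Submodule.map φ W)
        + Module.finrank F ↥(LinearMap.ker (φ.domRestrict W)) = s := by
      have h3 := LinearMap.finrank_range_add_finrank_ker (φ.domRestrict W)
      rw [LinearMap.range_domRestrict, hWfr] at h3
      exact h3
    -- rank of the matrix equals the rank of φ on W
    have hcols : (Mat c).rank = Module.finrank F ↥(Submodule.map φ W) := by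
      rw [Matrix.rank_eq_finrank_span_cols]
      have htr : (Mat c)ᵀ = fun i => b.equivFun (φ (g i)) := by
        funext i a
        simp only [Matrix.transpose_apply, Mat, Matrix.of_apply, hφ]
      rw [show (Mat c).col = (Mat c)ᵀ from rfl, htr]
      have hrange : Set.range (fun i => b.equivFun (φ (g i)))
          = ⇑b.equivFun '' (⇑φ '' Set.range g) := by
        rw [← Set.range_comp, ← Set.range_comp]
        rfl
      rw [hrange, ← LinearEquiv.coe_coe b.equivFun, ← Submodule.map_span, ← Submodule.map_span, ← hWdef]
      exact LinearEquiv.finrank_map_eq b.equivFun (Submodule.map φ W)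
    rw [hcols]
    omega
  -- matrices are additive in the message
  have hMatsub : ∀ c c' : Fin k → L, Mat c - Mat c' = Mat (c - c') := by
    intro c c'
    ext a i
    have hv : (∑ j : Fin k, c j * g i ^ q ^ (j : ℕ))
        - (∑ j : Fin k, c' j * g i ^ q ^ (j : ℕ))
        = ∑ j : Fin k, (c - c') j * g i ^ q ^ (j : ℕ) := by
      rw [← Finset.sum_sub_distrib]
      exact Finset.sum_congr rfl fun j _ => by rw [Pi.sub_apply, sub_mul]
    show (Mat c - Mat c') a i = Mat (c - c') a i
    have e1 : (Mat c - Mat c') a i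
        = b.equivFun (∑ j : Fin k, c j * g i ^ q ^ (j : ℕ)) a
          - b.equivFun (∑ j : Fin k, c' j * g i ^ q ^ (j : ℕ)) a := rfl
    rw [e1, ← Pi.sub_apply (b.equivFun _) (b.equivFun _), ← map_sub, hv]
    rfl
  have hMatInj : Function.Injective Mat := by
    intro c c' hcc
    by_contra hne
    have h2 := main (c - c') (sub_ne_zero.2 hne)
    rw [← hMatsub, hcc, sub_self, Matrix.rank_zero] at h2
    omega
  refine ⟨Finset.image Mat Finset.univ, ?_, ?_⟩
  · rw [Finset.card_image_of_injective _ hMatInj, Finset.card_univ, Fintype.card_fun,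
      Fintype.card_fin, hcardL]
  · rintro M hM M' hM' hne
    obtain ⟨c, _, rfl⟩ := Finset.mem_image.1 hM
    obtain ⟨c', _, rfl⟩ := Finset.mem_image.1 hM'
    have hcc : c ≠ c' := fun h => hne (congrArg Mat h)
    rw [hMatsub]
    exact main _ (sub_ne_zero.2 hcc)

end Gabidulin

section Glue

lemma maxGood_pow_ge {X Y : Type*} [Fintype X] [Nonempty X] [DecidableEq X]
    (Ω : X → Set Y) (n : ℕ) :
    maxGoodCode Ω ^ n ≤ maxGoodCode (chPow Ω n) := by
  obtain ⟨C, hC, hcard⟩ := exists_maxGoodCode Ω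
  have h := le_maxGoodCode (isGoodCode_pow hC n)
  rwa [Fintype.card_piFinset_const, hcard] at h

variable {F : Type*} [Field F] [Fintype F] [DecidableEq F] {m s : ℕ} {t : ℕ} {U : Finset (Fin s)}

lemma maxGood_pow_le (n : ℕ) :
    maxGoodCode (chPow (Rch F m s t U) n)
      ≤ ((Fintype.card F ^ m) ^ (s - min (2 * t) U.card)) ^ n :=
  maxGoodCode_le fun _ hC => good_pow_card_le hC

lemma maxGood_single_le :
    maxGoodCode (Rch F m s t U) ≤ (Fintype.card F ^ m) ^ (s - min (2 * t) U.card) := by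
  classical
  have h1 := maxGood_pow_ge (Rch F m s t U) 1
  have h2 := maxGood_pow_le (F := F) (m := m) (s := s) (t := t) (U := U) 1
  rw [pow_one] at h2
  calc maxGoodCode (Rch F m s t U) = maxGoodCode (Rch F m s t U) ^ 1 := (pow_one _).symm
    _ ≤ maxGoodCode (chPow (Rch F m s t U) 1) := h1
    _ ≤ _ := h2

lemma exists_good_opt (hsm : s ≤ m) (hm : 1 ≤ m) (t : ℕ) (U : Finset (Fin s)) :
    ∃ C : Finset (Matrix (Fin m) (Fin s) F), IsGoodCode (Rch F m s t U) C ∧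
      C.card = (Fintype.card F ^ m) ^ (s - min (2 * t) U.card) := by
  classical
  by_cases hU : U.card ≤ 2 * t
  · obtain ⟨C, hC, hcard⟩ := exists_good_easy (F := F) (m := m) t U
    refine ⟨C, hC, ?_⟩
    rw [hcard, min_eq_right hU]
  · push_neg at hU
    have hUs : U.card ≤ s := by simpa using Finset.card_le_univ U
    set k := s - 2 * t with hk
    have hk1 : 1 ≤ k := by omega
    have hks : k ≤ s := by omega
    obtain ⟨C, hcard, hrk⟩ := exists_good_rank_code (F := F) hsm hm k hk1 hks
    refine ⟨C, ⟨?_, ?_⟩, ?_⟩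
    · rw [← Finset.card_pos, hcard]
      positivity
    · intro M hM M' hM' hne
      rw [← Set.not_nonempty_iff_eq_empty]
      intro hconf
      have h1 := rank_sub_le_of_confusable hconf
      have h2 := hrk M hM M' hM' hne
      omega
    · rw [hcard, min_eq_left hU.le]

lemma maxGood_single_eq (hsm : s ≤ m) (hm : 1 ≤ m) (t : ℕ) (U : Finset (Fin s)) :
    maxGoodCode (Rch F m s t U) = (Fintype.card F ^ m) ^ (s - min (2 * t) U.card) := by
  refine le_antisymm maxGood_single_le ?_
  obtain ⟨C, hC, hcard⟩ := exists_good_opt (F := F) hsm hm t U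
  exact hcard ▸ le_maxGoodCode hC

lemma maxGood_pow_eq (hsm : s ≤ m) (hm : 1 ≤ m) (t : ℕ) (U : Finset (Fin s)) (n : ℕ) :
    maxGoodCode (chPow (Rch F m s t U) n)
      = ((Fintype.card F ^ m) ^ (s - min (2 * t) U.card)) ^ n := by
  classical
  refine le_antisymm (maxGood_pow_le n) ?_
  obtain ⟨C, hC, hcard⟩ := exists_good_opt (F := F) hsm hm t U
  have h := le_maxGoodCode (isGoodCode_pow hC n)
  rwa [Fintype.card_piFinset_const, hcard] at h

end Glue

end AuxLemmas

/-- for the rank-metric channel `R_t⟨U⟩` over `F_q^{m×s}` one has, for all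
`n ≥ 1`, `n·C(R) ≤ C(R^n) ≤ n·(s − min{2t, |U|})`; in particular
`C(R) ≤ C0(R) ≤ s − min{2t, |U|}`; moreover if `q ≥ m ≥ s` then all these inequalities
are equalities. -/
theorem capBase_Rch_bounds (F : Type*) [Field F] [Fintype F] [DecidableEq F]
    {m s : ℕ} (hm : 1 ≤ m) (hs : 1 ≤ s) (t : ℕ) (U : Finset (Fin s)) :
    (∀ n : ℕ, 1 ≤ n →
      (n : ℝ) * capBase (Fintype.card F ^ m) (Rch F m s t U)
        ≤ capBase (Fintype.card F ^ m) (chPow (Rch F m s t U) n) ∧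
      capBase (Fintype.card F ^ m) (chPow (Rch F m s t U) n)
        ≤ (n : ℝ) * ((s : ℝ) - ((min (2 * t) U.card : ℕ) : ℝ))) ∧
    (capBase (Fintype.card F ^ m) (Rch F m s t U)
        ≤ zeroCapBase (Fintype.card F ^ m) (Rch F m s t U) ∧
      zeroCapBase (Fintype.card F ^ m) (Rch F m s t U)
        ≤ (s : ℝ) - ((min (2 * t) U.card : ℕ) : ℝ)) ∧
    (s ≤ m → m ≤ Fintype.card F →
      (∀ n : ℕ, 1 ≤ n →
        (n : ℝ) * capBase (Fintype.card F ^ m) (Rch F m s t U)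
          = capBase (Fintype.card F ^ m) (chPow (Rch F m s t U) n) ∧
        capBase (Fintype.card F ^ m) (chPow (Rch F m s t U) n)
          = (n : ℝ) * ((s : ℝ) - ((min (2 * t) U.card : ℕ) : ℝ))) ∧
      capBase (Fintype.card F ^ m) (Rch F m s t U)
        = zeroCapBase (Fintype.card F ^ m) (Rch F m s t U) ∧
      zeroCapBase (Fintype.card F ^ m) (Rch F m s t U)
        = (s : ℝ) - ((min (2 * t) U.card : ℕ) : ℝ)) := by
  classical
  have hq : 1 < Fintype.card F := Fintype.one_lt_card
  set R := Rch F m s t U with hR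
  set r : ℕ := min (2 * t) U.card with hrdef
  set bN : ℕ := Fintype.card F ^ m with hbN
  have hUs : U.card ≤ s := by simpa using Finset.card_le_univ U
  have hrs : r ≤ s := le_trans (min_le_right _ _) hUs
  have hbN1 : 1 < bN := Nat.one_lt_pow (by omega) hq
  have hbR1 : (1 : ℝ) < (bN : ℝ) := by exact_mod_cast hbN1
  have hlogb : ∀ N : ℕ, Real.logb (bN : ℝ) (((bN ^ N : ℕ) : ℝ)) = (N : ℝ) := by
    intro N
    push_cast
    rw [Real.logb_pow, Real.logb_self_eq_one hbR1, mul_one]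
  have hsr_cast : (((s - r : ℕ)) : ℝ) = (s : ℝ) - (r : ℝ) := Nat.cast_sub hrs
  -- upper bound
  have hub : ∀ n : ℕ, capBase bN (chPow R n) ≤ (n : ℝ) * ((s : ℝ) - (r : ℝ)) := by
    intro n
    have h1 : maxGoodCode (chPow R n) ≤ (bN ^ (s - r)) ^ n := maxGood_pow_le n
    have h2 : capBase bN (chPow R n)
        ≤ Real.logb (bN : ℝ) ((((bN ^ (s - r)) ^ n : ℕ)) : ℝ) := by
      apply Real.logb_le_logb_of_le hbR1
      · exact_mod_cast one_le_maxGoodCode (chPow R n)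
      · exact_mod_cast h1
    have h3 : Real.logb (bN : ℝ) ((((bN ^ (s - r)) ^ n : ℕ)) : ℝ)
        = (n : ℝ) * ((s : ℝ) - (r : ℝ)) := by
      rw [show ((bN ^ (s - r)) ^ n : ℕ) = bN ^ ((s - r) * n) from (pow_mul _ _ _).symm, hlogb]
      push_cast [Nat.cast_sub hrs]
      ring
    rw [← h3]
    exact h2
  -- lower bound
  have hlb : ∀ n : ℕ, (n : ℝ) * capBase bN R ≤ capBase bN (chPow R n) := by
    intro n
    have h1 : maxGoodCode R ^ n ≤ maxGoodCode (chPow R n) := maxGood_pow_ge R n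
    have h2 : Real.logb (bN : ℝ) (((maxGoodCode R ^ n : ℕ)) : ℝ)
        ≤ Real.logb (bN : ℝ) ((maxGoodCode (chPow R n) : ℝ)) := by
      apply Real.logb_le_logb_of_le hbR1
      · have h4 : 0 < maxGoodCode R ^ n := pow_pos (one_le_maxGoodCode R) n
        exact_mod_cast h4
      · exact_mod_cast h1
    have h3 : Real.logb (bN : ℝ) (((maxGoodCode R ^ n : ℕ)) : ℝ)
        = (n : ℝ) * capBase bN R := by
      push_cast
      rw [Real.logb_pow]
      rfl
    rw [← h3]
    exact h2
  -- the zero-error capacity set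
  set S : Set ℝ := {x : ℝ | ∃ n : ℕ, 1 ≤ n ∧ x = capBase bN (chPow R n) / n} with hS
  have hzc : zeroCapBase bN R = sSup S := rfl
  have hSne : S.Nonempty := ⟨capBase bN (chPow R 1) / 1, 1, le_refl 1, by norm_num⟩
  have hSub : ∀ x ∈ S, x ≤ (s : ℝ) - (r : ℝ) := by
    rintro x ⟨n, hn, rfl⟩
    rw [div_le_iff₀ (by exact_mod_cast Nat.lt_of_lt_of_le Nat.zero_lt_one hn : (0 : ℝ) < (n : ℝ))]
    calc capBase bN (chPow R n) ≤ (n : ℝ) * ((s : ℝ) - (r : ℝ)) := hub n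
      _ = ((s : ℝ) - (r : ℝ)) * n := by ring
  have hSbdd : BddAbove S := ⟨(s : ℝ) - (r : ℝ), fun x hx => hSub x hx⟩
  refine ⟨fun n hn => ⟨hlb n, hub n⟩, ⟨?_, ?_⟩, ?_⟩
  · -- capBase ≤ zeroCapBase
    have hmem : capBase bN (chPow R 1) / 1 ∈ S := ⟨1, le_refl 1, by norm_num⟩
    have h1 : capBase bN R ≤ capBase bN (chPow R 1) / 1 := by
      rw [div_one]
      have h5 := hlb 1
      rwa [Nat.cast_one, one_mul] at h5
    exact h1.trans (le_csSup hSbdd hmem)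
  · exact csSup_le hSne hSub
  · intro hsm hmq
    have hmaxReq : maxGoodCode R = bN ^ (s - r) := by
      rw [hR, hbN, hrdef]
      exact maxGood_single_eq hsm hm t U
    have hmaxPow : ∀ n : ℕ, maxGoodCode (chPow R n) = (bN ^ (s - r)) ^ n := by
      intro n
      rw [hR, hbN, hrdef]
      exact maxGood_pow_eq hsm hm t U n
    have hcapR : capBase bN R = (s : ℝ) - (r : ℝ) := by
      show Real.logb (bN : ℝ) ((maxGoodCode R : ℕ) : ℝ) = _
      rw [hmaxReq, hlogb, hsr_cast]
    have hcapPow : ∀ n : ℕ, capBase bN (chPow R n) = (n : ℝ) * ((s : ℝ) - (r : ℝ)) := by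
      intro n
      show Real.logb (bN : ℝ) ((maxGoodCode (chPow R n) : ℕ) : ℝ) = _
      rw [hmaxPow n,
        show ((bN ^ (s - r)) ^ n : ℕ) = bN ^ ((s - r) * n) from (pow_mul _ _ _).symm, hlogb]
      push_cast [Nat.cast_sub hrs]
      ring
    have hSeq : S = {(s : ℝ) - (r : ℝ)} := by
      apply Set.eq_singleton_iff_unique_mem.2
      constructor
      · refine ⟨1, le_refl 1, ?_⟩
        rw [hcapPow 1, Nat.cast_one, one_mul, div_one]
      · rintro x ⟨n, hn, rfl⟩
        rw [hcapPow n]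
        have hn0 : (n : ℝ) ≠ 0 := Nat.cast_ne_zero.2 (by omega)
        exact mul_div_cancel_left₀ _ hn0
    have hzeq : zeroCapBase bN R = (s : ℝ) - (r : ℝ) := by
      rw [hzc, hSeq, csSup_singleton]
    refine ⟨fun n hn => ⟨?_, hcapPow n⟩, ?_, hzeq⟩
    · rw [hcapR, hcapPow n]
    · rw [hzeq, hcapR]
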